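/- arXiv:2110.03545 — 3 statements merged into one kernel-verified Lean document; each statement's English description precedes it below -/
import Mathlib

section
/- Consider the e×e incidence matrices Δ^{(D_i)} for i = 1,...,β+1, where Δ^{(D_i)}_{ℓ,j} = 1 if ℓ ∈ B_{π^{-(i-1)(e-p)}(j)} and 0 otherwise, with blocks B_j = {π^0(j),...,π^{p-1}(j)} and β = ⌈e/p⌉ - 1. Then the matrix Δ = Σ_{i=1}^{β+1} Δ^{(D_i)} has every entry at least 1. -/
lemma subRight_pow_apply {G : Type*} [AddCommGroup G] (a : G) (n : ℕ) (x : G) :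
    ((Equiv.subRight a) ^ n) x = x - n • a := by
  induction n with
  | zero => simp
  | succ k ih =>
    rw [pow_succ', Equiv.Perm.mul_apply, Equiv.subRight_apply, ih, succ_nsmul]
    abel

lemma subRight_inv_pow_apply {G : Type*} [AddCommGroup G] (a : G) (n : ℕ) (x : G) :
    (((Equiv.subRight a)⁻¹) ^ n) x = x + n • a := by
  induction n with
  | zero => simp
  | succ k ih =>
    rw [pow_succ', Equiv.Perm.mul_apply, ih, Equiv.Perm.inv_def,
      Equiv.subRight_symm_apply, succ_nsmul]
    abel

/-- With [e] modeled as ZMod e, π(x) = x - α a cyclic shift with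
gcd(α,e) = 1, blocks B_j = {π^0(j),…,π^{p-1}(j)}, and β = ⌈e/p⌉ - 1, the sum
Δ = Σ_{i=1}^{β+1} Δ^{(D_i)} of the incidence matrices
Δ^{(D_i)}_{ℓ,j} = 1 if ℓ ∈ B_{π^{-(i-1)(e-p)}(j)} else 0 has every entry at least 1. -/
theorem stmt8 (e p : ℕ) [NeZero e] (hp : 1 ≤ p) (hpe : p ≤ e)
    (α : ℕ) (hα : Nat.Coprime α e)
    (π : Equiv.Perm (ZMod e)) (hπ : π = Equiv.subRight (α : ZMod e))
    (β : ℕ) (hβ : β = (e + p - 1) / p - 1)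
    (B : ZMod e → Finset (ZMod e))
    (hB : ∀ j, B j = Finset.image (fun t => (π ^ t) j) (Finset.range p))
    (Δ : Fin (β + 1) → Matrix (ZMod e) (ZMod e) ℕ)
    (hΔ : ∀ (i : Fin (β + 1)) (ℓ j : ZMod e),
      Δ i ℓ j = if ℓ ∈ B (((π⁻¹) ^ (i.val * (e - p))) j) then 1 else 0) :
    ∀ ℓ j : ZMod e, 1 ≤ (∑ i : Fin (β + 1), Δ i) ℓ j := by
  intro ℓ j
  have he : 0 < e := Nat.pos_of_ne_zero (NeZero.ne e)
  -- β = (e-1)/p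
  have hkey : (e + p - 1) / p = (e - 1) / p + 1 := by
    rw [show e + p - 1 = (e - 1) + p by omega, Nat.add_div_right _ hp]
  have hβ' : β = (e - 1) / p := by rw [hβ, hkey, Nat.add_sub_cancel]
  -- α as a unit
  set u : (ZMod e)ˣ := ZMod.unitOfCoprime α hα with hu
  have hucoe : (u : ZMod e) = (α : ZMod e) := rfl
  set m : ℕ := ((ℓ - j) * (↑u⁻¹ : ZMod e)).val with hm
  have hmlt : m < e := ZMod.val_lt _
  have hmα : (m : ZMod e) * α = ℓ - j := by
    rw [hm, ZMod.natCast_val, ZMod.cast_id, ← hucoe, mul_assoc, Units.inv_mul, mul_one]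
  set r : ℕ := (e - m) % e with hr
  have hrlt : r < e := Nat.mod_lt _ he
  have hrcast : (r : ZMod e) = -(m : ZMod e) := by
    rw [hr, ZMod.natCast_mod, Nat.cast_sub (le_of_lt hmlt), ZMod.natCast_self, zero_sub]
  set i : ℕ := r / p with hi
  set t : ℕ := r % p with ht
  have hiβ : i ≤ β := by
    rw [hβ', hi]
    exact Nat.div_le_div_right (by omega)
  have hilt : i < β + 1 := by omega
  have htp : t < p := Nat.mod_lt _ (by omega)
  have hrdecomp : p * i + t = r := Nat.div_add_mod r p
  have hmem : ℓ ∈ B (((π⁻¹) ^ (i * (e - p))) j) := by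
    rw [hB, Finset.mem_image]
    refine ⟨t, Finset.mem_range.mpr htp, ?_⟩
    rw [hπ, subRight_pow_apply, subRight_inv_pow_apply, nsmul_eq_mul, nsmul_eq_mul]
    have hA : ((i * (e - p) : ℕ) : ZMod e) = -((i * p : ℕ) : ZMod e) := by
      refine eq_neg_of_add_eq_zero_left ?_
      rw [← Nat.cast_add, ← Nat.mul_add, Nat.sub_add_cancel hpe,
        Nat.cast_mul, ZMod.natCast_self, mul_zero]
    have hBr : ((i * p : ℕ) : ZMod e) + (t : ZMod e) = (r : ZMod e) := by
      rw [← Nat.cast_add]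
      congr 1
      rw [Nat.mul_comm]
      exact hrdecomp
    have hkey2 : -((i * p : ℕ) : ZMod e) - (t : ZMod e) = (m : ZMod e) := by
      calc -((i * p : ℕ) : ZMod e) - (t : ZMod e)
          = -(((i * p : ℕ) : ZMod e) + (t : ZMod e)) := by ring
        _ = -((r : ℕ) : ZMod e) := by rw [hBr]
        _ = (m : ZMod e) := by rw [hrcast]; ring
    rw [hA]
    linear_combination hkey2 * (α : ZMod e) + hmα
  have hone : Δ ⟨i, hilt⟩ ℓ j = 1 := by
    rw [hΔ]
    simpa using hmem
  have hle := Finset.single_le_sum (f := fun i : Fin (β + 1) => Δ i ℓ j)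
    (fun _ _ => Nat.zero_le _) (Finset.mem_univ (⟨i, hilt⟩ : Fin (β + 1)))
  simpa [Matrix.sum_apply, hone] using hle
end

section
/- In the setting of Theorem 2, for every ℓ, j ∈ [e] there exists d ∈ {0,...,β} with ℓ ∈ B_{π^{-d(e-p)}(j)}, where B_i = {π^0(i),...,π^{p-1}(i)}. -/
lemma pow_apply_aux (e : ℕ) (α : ℕ) (π : Equiv.Perm (ZMod e))
    (hπ : π = Equiv.subRight (α : ZMod e)) :
    ∀ (t : ℕ) (i : ZMod e), (π ^ t) i = i - (t : ZMod e) * α := by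
  subst hπ
  intro t
  induction t with
  | zero => simp
  | succ n ih =>
    intro i
    rw [pow_succ, Equiv.Perm.mul_apply, Equiv.subRight_apply, ih]
    push_cast
    ring

lemma inv_pow_apply_aux (e : ℕ) (α : ℕ) (π : Equiv.Perm (ZMod e))
    (hπ : π = Equiv.subRight (α : ZMod e)) :
    ∀ (t : ℕ) (i : ZMod e), ((π⁻¹) ^ t) i = i + (t : ZMod e) * α := by
  subst hπ
  intro t
  induction t with
  | zero => simp
  | succ n ih =>
    intro i
    rw [pow_succ, Equiv.Perm.mul_apply]
    have h1 : (Equiv.subRight ((α : ZMod e)))⁻¹ i = i + α := by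
      simp [Equiv.Perm.inv_def]
    rw [h1, ih]
    push_cast
    ring

/-- coverage: In the setting of Theorem 2, with [e] modeled as ZMod e,
π(x) = x - α a cyclic shift with gcd(α,e) = 1, β = ⌈e/p⌉ - 1, and blocks
B_i = {π^0(i),…,π^{p-1}(i)}: for every submatrix index ℓ and every column j there exists
d ∈ {0,…,β} with ℓ ∈ B_{π^{-d(e-p)}(j)}, i.e., every pair (ℓ, share) is computed at some
edge node at least once. -/
theorem stmt14 (e p : ℕ) [NeZero e] (hp : 1 ≤ p) (hpe : p ≤ e)
    (α : ℕ) (hα : Nat.Coprime α e)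
    (π : Equiv.Perm (ZMod e)) (hπ : π = Equiv.subRight (α : ZMod e))
    (β : ℕ) (hβ : β = (e + p - 1) / p - 1)
    (B : ZMod e → Finset (ZMod e))
    (hB : ∀ i, B i = Finset.image (fun t => (π ^ t) i) (Finset.range p)) :
    ∀ ℓ j : ZMod e, ∃ d ≤ β, ℓ ∈ B (((π⁻¹) ^ (d * (e - p))) j) := by
  intro ℓ j
  have hαu : (α : ZMod e) * (α : ZMod e)⁻¹ = 1 := ZMod.coe_mul_inv_eq_one α hα
  set m : ℕ := ((j - ℓ) * (α : ZMod e)⁻¹).val with hm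
  have hmlt : m < e := ZMod.val_lt _
  have hmcast : (m : ZMod e) = (j - ℓ) * (α : ZMod e)⁻¹ := by
    rw [hm, ZMod.natCast_val, ZMod.cast_id]
  refine ⟨m / p, ?_, ?_⟩
  · -- m / p ≤ β = (e-1)/p
    have hβ' : β = (e - 1) / p := by
      subst hβ
      have h1 : 1 ≤ e := NeZero.one_le
      have h2 : e + p - 1 = (e - 1) + p := by omega
      rw [h2, Nat.add_div_right _ hp]
      simp
    rw [hβ']
    exact Nat.div_le_div_right (by omega)
  · rw [hB]
    simp only [Finset.mem_image, Finset.mem_range]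
    refine ⟨m % p, Nat.mod_lt _ hp, ?_⟩
    rw [pow_apply_aux e α π hπ, inv_pow_apply_aux e α π hπ]
    -- goal: j + (m/p * (e-p)) * α - (m%p) * α = ℓ
    have hep : ((e - p : ℕ) : ZMod e) = - (p : ZMod e) := by
      have : ((e - p : ℕ) : ZMod e) + (p : ZMod e) = ((e - p + p : ℕ) : ZMod e) := by
        push_cast; ring
      rw [Nat.sub_add_cancel hpe] at this
      simp [ZMod.natCast_self] at this
      linear_combination this
    push_cast
    rw [hep]
    have hmsplit : ((m / p : ℕ) : ZMod e) * (p : ZMod e) + ((m % p : ℕ) : ZMod e)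
        = (m : ZMod e) := by
      calc ((m / p : ℕ) : ZMod e) * (p : ZMod e) + ((m % p : ℕ) : ZMod e)
          = ((m / p * p + m % p : ℕ) : ZMod e) := by push_cast; ring
        _ = (m : ZMod e) := by rw [Nat.div_add_mod' m p]
    have key : ((m / p : ℕ) : ZMod e) * (-(p : ZMod e)) * α - ((m % p : ℕ) : ZMod e) * α
        = -(m : ZMod e) * α := by
      rw [← hmsplit]; ring
    calc j + ((m / p : ℕ) : ZMod e) * (-(p : ZMod e)) * (α : ZMod e)
          - ((m % p : ℕ) : ZMod e) * (α : ZMod e)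
        = j + (((m / p : ℕ) : ZMod e) * (-(p : ZMod e)) * α
            - ((m % p : ℕ) : ZMod e) * α) := by ring
      _ = j + (-(m : ZMod e) * α) := by rw [key]
      _ = j - (j - ℓ) * ((α : ZMod e)⁻¹ * α) := by rw [hmcast]; ring
      _ = ℓ := by rw [mul_comm ((α : ZMod e)⁻¹), hαu]; ring
end

section
/- Latency decomposition lower bound: in any scheme where node j starts computing on its h'-th share matrix at time L^{start,h'}_j = max{L^{start,h'-1}_j + pm/e, L^{up,h'}_j} for h' > 1 and L^{start,1}_j = λ_j/τ + L^{up,1}_j, the start time satisfies L^{start,h'}_j ≥ max{λ_j/τ + γr j + (h'-1)pm/e, γ r(e(h'-1)+j)} for all h' ∈ [a]. -/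
/-- latency decomposition lower bound: With upload times
L^{up,h'}_j = γ r (e(h'-1)+j), setup time λ_j ≥ 0, batch computation time pm/e, and start
times defined by L^{start,1}_j = λ_j/τ + L^{up,1}_j and, for h' > 1,
L^{start,h'}_j = max{L^{start,h'-1}_j + pm/e, L^{up,h'}_j}, we have for all h' ∈ [a]:
L^{start,h'}_j ≥ max{λ_j/τ + γ r j + (h'-1)·pm/e, γ r (e(h'-1)+j)}. -/
theorem stmt19 (γ r p m τ lam : ℝ) (hγ : 0 < γ) (hr : 0 < r) (hp : 0 < p)
    (hm : 0 < m) (hτ : 0 < τ) (hlam : 0 ≤ lam)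
    (e j a : ℕ) (he : 1 ≤ e) (hj1 : 1 ≤ j) (hje : j ≤ e) (ha : 1 ≤ a)
    (Ls : ℕ → ℝ)
    (h1 : Ls 1 = lam / τ + γ * r * ((e * (1 - 1) + j : ℕ) : ℝ))
    (hrec : ∀ h', 2 ≤ h' →
      Ls h' = max (Ls (h' - 1) + p * m / e) (γ * r * ((e * (h' - 1) + j : ℕ) : ℝ))) :
    ∀ h', 1 ≤ h' → h' ≤ a →
      max (lam / τ + γ * r * j + ((h' : ℝ) - 1) * (p * m / e))
          (γ * r * ((e * (h' - 1) + j : ℕ) : ℝ)) ≤ Ls h' := by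
  intro h'
  induction h' with
  | zero => intro h; omega
  | succ n ih =>
    intro _ hna
    rcases Nat.eq_zero_or_pos n with hn0 | hn1
    · subst hn0
      rw [h1, max_le_iff]
      norm_num
      exact div_nonneg hlam hτ.le
    · have h2 : 2 ≤ n + 1 := by omega
      rw [hrec (n+1) h2]
      simp only [Nat.add_sub_cancel]
      rw [max_le_iff]
      have ihn := ih (by omega) (by omega)
      constructor
      · apply le_max_of_le_left
        have hle : lam / τ + γ * r * j + ((n : ℝ) - 1) * (p * m / e) ≤ Ls n :=
          le_trans (le_max_left _ _) ihn
        have : lam / τ + γ * r * j + (((n:ℕ)+1 : ℝ) - 1) * (p * m / e)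
            = (lam / τ + γ * r * j + ((n : ℝ) - 1) * (p * m / e)) + p * m / e := by
          ring
        push_cast
        push_cast at this
        linarith
      · exact le_max_right _ _
end
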